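/- Bailey pair inversion: if β_L = Σ_{r=0}^L α_r / ((q;q)_{L-r} (aq;q)_{L+r}) for all L, then α_L = ((1 - a q^{2L})/(1 - a)) Σ_{r=0}^L (-1)^{L-r} q^{(L-r)(L-r-1)/2} (a;q)_{L+r} β_r / (q;q)_{L-r}. -/

import Mathlib

/-!
Substituting the Bailey relation for `β` and exchanging the two sums leaves, as coefficient of
`α s`, a sum over `r = s + j`, `0 ≤ j ≤ n := L - s`. For `n = 0` it is `(a;q)_{2L} / (aq;q)_{2L}`,
which the factor `(1 - a q^{2L}) / (1 - a)` turns into `1`. For `n > 0` the factorisation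
`(a;q)_{2s+n+j} = (1 - a) (aq;q)_{2s+j} (a q^{2s+1} · q^j; q)_{n-1}` makes it `(1 - a)` times
`∑_j w_j f(q^j)` with `f(x) = (a q^{2s+1} x; q)_{n-1}` a polynomial of degree `< n` and
`w_j = (-1)^{n-j} q^{binom(n-j,2)} / ((q;q)_{n-j} (q;q)_j)`. By Cauchy's q-binomial theorem the
`(q;q)_n w_j` are the coefficients of `∏_{k<n} (X - q^k)`, so `∑_j w_j q^{mj}` vanishes for every
`m < n`, hence so does `∑_j w_j f(q^j)`.
-/

/-- Finite q-shifted factorial `(x;q)_n`. -/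
noncomputable def qp (q x : ℂ) (n : ℕ) : ℂ := ∏ k ∈ Finset.range n, (1 - x * q ^ k)

open Finset Polynomial

lemma qp_zero (q x : ℂ) : qp q x 0 = 1 := prod_range_zero _

lemma qp_succ (q x : ℂ) (n : ℕ) : qp q x (n + 1) = qp q x n * (1 - x * q ^ n) :=
  prod_range_succ _ _

lemma qp_add (q x : ℂ) (m n : ℕ) : qp q x (m + n) = qp q x m * qp q (x * q ^ m) n := by
  simp only [qp, prod_range_add, pow_add, mul_assoc]

lemma qp_succ_eq_one_sub_mul (q x : ℂ) (n : ℕ) : qp q x (n + 1) = (1 - x) * qp q (x * q) n := by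
  rw [add_comm, qp_add, pow_one, qp, prod_range_one, pow_zero, mul_one]

lemma qp_mul_one_sub (q x : ℂ) (n : ℕ) : qp q x n * (1 - x * q ^ n) = (1 - x) * qp q (x * q) n := by
  rw [← qp_succ, qp_succ_eq_one_sub_mul]

lemma qp_self_ne_zero {q : ℂ} (hq : ∀ n : ℕ, 0 < n → q ^ n ≠ 1) (n : ℕ) : qp q q n ≠ 0 :=
  prod_ne_zero_iff.2 fun k _ => by
    rw [← pow_succ']
    exact sub_ne_zero.2 (hq (k + 1) k.succ_pos).symm

lemma exists_natDegree_le_eval_eq_qp (q b : ℂ) (m : ℕ) :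
    ∃ f : ℂ[X], f.natDegree ≤ m ∧ ∀ x, qp q (b * x) m = f.eval x := by
  refine ⟨∏ k ∈ range m, (1 - C (b * q ^ k) * X), ?_, fun x => ?_⟩
  · calc (∏ k ∈ range m, (1 - C (b * q ^ k) * X)).natDegree
        ≤ ∑ k ∈ range m, (1 - C (b * q ^ k) * X).natDegree := natDegree_prod_le _ _
      _ ≤ ∑ _k ∈ range m, 1 := by gcongr; compute_degree
      _ = m := by simp
  · simp only [qp, eval_prod, eval_sub, eval_one, eval_mul, eval_C, eval_X]
    exact prod_congr rfl fun k _ => by ring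

lemma nodal_range_succ (q : ℂ) (n : ℕ) :
    Lagrange.nodal (range (n + 1)) (q ^ ·) =
      Lagrange.nodal (range n) (q ^ ·) * (X - C (q ^ n)) := by
  simp only [Lagrange.nodal_eq, prod_range_succ]

lemma coeff_nodal_range_pow_mul (q : ℂ) {n j : ℕ} (hj : j ≤ n) :
    (Lagrange.nodal (range n) (q ^ ·)).coeff j * (qp q q (n - j) * qp q q j) =
      (-1) ^ (n - j) * q ^ ((n - j) * (n - j - 1) / 2) * qp q q n := by
  induction n generalizing j with
  | zero => obtain rfl := Nat.le_zero.1 hj; simp [Lagrange.nodal_eq, qp_zero]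
  | succ n ih =>
    rw [nodal_range_succ]
    rcases j with _ | j
    · have h := ih (Nat.zero_le n)
      simp only [mul_coeff_zero, coeff_sub, coeff_X_zero, coeff_C_zero, Nat.sub_zero, qp_zero,
        Nat.triangle_succ, qp_succ] at h ⊢
      linear_combination (-(q ^ n) * (1 - q * q ^ n)) * h
    rw [coeff_mul_X_sub_C]
    rcases Nat.lt_or_eq_of_le (Nat.le_of_succ_le_succ hj) with hjn | rfl
    · obtain ⟨d, rfl⟩ := Nat.exists_eq_add_of_lt hjn
      have h₁ := ih hjn.le
      have h₂ := ih hjn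
      have e₁ : j + d + 1 - j = d + 1 := by omega
      have e₂ : j + d + 1 - (j + 1) = d := by omega
      have e₃ : j + d + 1 + 1 - (j + 1) = d + 1 := by omega
      rw [e₁, Nat.triangle_succ] at h₁
      rw [e₂] at h₂
      rw [e₃, Nat.triangle_succ, qp_succ q q d, qp_succ q q j, qp_succ q q (j + d + 1)] at *
      linear_combination (1 - q * q ^ j) * h₁ - q ^ (j + d + 1) * (1 - q * q ^ d) * h₂
    · have hdeg : (Lagrange.nodal (range j) (q ^ ·)).natDegree = j := by
        rw [Lagrange.natDegree_nodal, card_range]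
      have hlead := (Lagrange.nodal_monic (s := range j) (v := (q ^ ·))).coeff_natDegree
      rw [hdeg] at hlead
      rw [hlead, coeff_eq_zero_of_natDegree_lt (by omega)]
      simp [qp_zero]

lemma sum_coeff_mul_eval_pow_eq_zero {R : Type*} [CommRing R] {P f : R[X]} {y : R} {n : ℕ}
    (hP : P.natDegree ≤ n) (hf : f.natDegree < n) (hroots : ∀ m < n, P.eval (y ^ m) = 0) :
    ∑ j ∈ range (n + 1), P.coeff j * f.eval (y ^ j) = 0 := by
  calc ∑ j ∈ range (n + 1), P.coeff j * f.eval (y ^ j)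
      = ∑ m ∈ range n, f.coeff m * ∑ j ∈ range (n + 1), P.coeff j * (y ^ m) ^ j := by
        simp_rw [eval_eq_sum_range' hf, mul_sum]
        rw [sum_comm]
        refine sum_congr rfl fun m _ => sum_congr rfl fun j _ => ?_
        rw [← pow_mul, ← pow_mul, mul_comm m j]
        ring
    _ = 0 := sum_eq_zero fun m hm => by
        rw [← eval_eq_sum_range' (Nat.lt_succ_of_le hP), hroots m (mem_range.1 hm), mul_zero]

lemma sum_qbinom_mul_eval_eq_zero {q : ℂ} (hq : ∀ n : ℕ, 0 < n → q ^ n ≠ 1) {n : ℕ} {f : ℂ[X]}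
    (hf : f.natDegree < n) :
    ∑ j ∈ range (n + 1), (-1) ^ (n - j) * q ^ ((n - j) * (n - j - 1) / 2) /
      (qp q q (n - j) * qp q q j) * f.eval (q ^ j) = 0 := by
  set P := Lagrange.nodal (range n) (q ^ ·)
  have hterm : ∀ j ∈ range (n + 1), (-1) ^ (n - j) * q ^ ((n - j) * (n - j - 1) / 2) /
      (qp q q (n - j) * qp q q j) * f.eval (q ^ j) =
        (qp q q n)⁻¹ * (P.coeff j * f.eval (q ^ j)) := by
    intro j hj
    have hc := coeff_nodal_range_pow_mul q (Nat.le_of_lt_succ (mem_range.1 hj))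
    have := qp_self_ne_zero hq n
    have := qp_self_ne_zero hq (n - j)
    have := qp_self_ne_zero hq j
    field_simp
    linear_combination (-(eval (q ^ j) f)) * hc
  have hP : P.natDegree ≤ n := by rw [Lagrange.natDegree_nodal, card_range]
  have hroots : ∀ m < n, P.eval (q ^ m) = 0 := fun m hm =>
    Lagrange.eval_nodal_at_node (v := (q ^ ·)) (mem_range.2 hm)
  rw [sum_congr rfl hterm, ← mul_sum, sum_coeff_mul_eval_pow_eq_zero hP hf hroots, mul_zero]

lemma sum_range_mul_sum_range_eq {R : Type*} [CommSemiring R] (N : ℕ → R) (M : ℕ → ℕ → R)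
    (α : ℕ → R) (L : ℕ) :
    ∑ r ∈ range (L + 1), N r * ∑ s ∈ range (r + 1), M r s * α s =
      ∑ s ∈ range (L + 1), (∑ r ∈ Ico s (L + 1), N r * M r s) * α s := by
  simp_rw [mul_sum, sum_mul, range_eq_Ico, mul_assoc]
  exact (sum_Ico_Ico_comm 0 (L + 1) fun s r => N r * (M r s * α s)).symm

lemma sum_Ico_bailey_kernel {q a : ℂ} (hq : ∀ n : ℕ, 0 < n → q ^ n ≠ 1)
    (haq : ∀ n, qp q (a * q) n ≠ 0) {s L : ℕ} (hs : s ≤ L) :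
    ∑ r ∈ Ico s (L + 1), (-1) ^ (L - r) * q ^ ((L - r) * (L - r - 1) / 2) * qp q a (L + r) /
        qp q q (L - r) * (qp q q (r - s) * qp q (a * q) (r + s))⁻¹ =
      if s = L then qp q a (2 * L) / qp q (a * q) (2 * L) else 0 := by
  obtain ⟨n, rfl⟩ := Nat.exists_eq_add_of_le hs
  rw [sum_Ico_eq_sum_range, show s + n + 1 - s = n + 1 by omega]
  have e₁ : ∀ j, s + n - (s + j) = n - j := fun j => by omega
  have e₂ : ∀ j, s + j - s = j := fun j => by omega
  have e₃ : ∀ j, s + j + s = 2 * s + j := fun j => by omega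
  simp only [e₁, e₂, e₃]
  rcases n with _ | m
  · simp [qp_zero, two_mul, div_eq_mul_inv]
  obtain ⟨f, hf, hfeval⟩ := exists_natDegree_le_eval_eq_qp q (a * q ^ (2 * s + 1)) m
  have hterm : ∀ j ∈ range (m + 1 + 1),
      (-1) ^ (m + 1 - j) * q ^ ((m + 1 - j) * (m + 1 - j - 1) / 2) *
        qp q a (s + (m + 1) + (s + j)) / qp q q (m + 1 - j) *
          (qp q q j * qp q (a * q) (2 * s + j))⁻¹ =
      (1 - a) * ((-1) ^ (m + 1 - j) * q ^ ((m + 1 - j) * (m + 1 - j - 1) / 2) /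
        (qp q q (m + 1 - j) * qp q q j) * f.eval (q ^ j)) := by
    intro j _
    have hsplit : qp q a (s + (m + 1) + (s + j)) =
        (1 - a) * qp q (a * q) (2 * s + j) * f.eval (q ^ j) := by
      rw [show s + (m + 1) + (s + j) = 2 * s + j + 1 + m by omega, qp_add, qp_succ_eq_one_sub_mul,
        ← hfeval, show a * q ^ (2 * s + j + 1) = a * q ^ (2 * s + 1) * q ^ j by ring]
    have := haq (2 * s + j)
    rw [hsplit]
    field_simp
  rw [if_neg (by omega), sum_congr rfl hterm, ← mul_sum,
    sum_qbinom_mul_eval_eq_zero hq (by omega), mul_zero]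

/-- inversion of the Bailey pair relation. -/
theorem bailey_pair_inversion (q a : ℂ) (hq : ∀ n : ℕ, 0 < n → q ^ n ≠ 1) (ha : a ≠ 1)
    (haq : ∀ n, qp q (a * q) n ≠ 0) (α β : ℕ → ℂ)
    (hBP : ∀ L, β L = ∑ r ∈ Finset.range (L + 1),
      α r / (qp q q (L - r) * qp q (a * q) (L + r))) :
    ∀ L, α L = (1 - a * q ^ (2 * L)) / (1 - a) *
      ∑ r ∈ Finset.range (L + 1),
        (-1) ^ (L - r) * q ^ ((L - r) * (L - r - 1) / 2) * qp q a (L + r) * β r /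
          qp q q (L - r) := by
  intro L
  have hsum : ∑ r ∈ range (L + 1),
      (-1) ^ (L - r) * q ^ ((L - r) * (L - r - 1) / 2) * qp q a (L + r) * β r / qp q q (L - r) =
      ∑ r ∈ range (L + 1), (-1) ^ (L - r) * q ^ ((L - r) * (L - r - 1) / 2) * qp q a (L + r) /
        qp q q (L - r) * ∑ s ∈ range (r + 1), (qp q q (r - s) * qp q (a * q) (r + s))⁻¹ * α s := by
    refine sum_congr rfl fun r _ => ?_
    simp_rw [hBP r, div_eq_mul_inv, mul_comm (α _)]
    ring
  rw [hsum, sum_range_mul_sum_range_eq, sum_congr rfl fun s hs =>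
    congrArg (· * α s) (sum_Ico_bailey_kernel hq haq (Nat.le_of_lt_succ (mem_range.1 hs)))]
  simp only [ite_mul, zero_mul, sum_ite_eq', mem_range, Nat.lt_succ_self, if_true]
  have hcancel := qp_mul_one_sub q a (2 * L)
  have := haq (2 * L)
  have := sub_ne_zero.2 ha.symm
  field_simp
  linear_combination (-α L) * hcancel
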